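/- Let $q$ be the characteristic exponent of a one-dimensional Lévy process $L$, and suppose $\mathrm{Re}\, q(2\pi k/\tau) > 0$ for all $k \in \mathbb{Z}\setminus\{0\}$. Let $f_\tau$ be a bounded measurable $\tau$-periodic function satisfying $\mathbb{E}^x[f_\tau(L_t)] = f_\tau(x)$ for all $x \in \mathbb{R}$ and $t \ge 0$. Then $f_\tau$ is Lebesgue-a.e. constant. Consequently, the projection $L^\tau$ of $L$ on the torus $\mathbb{R}/\tau\mathbb{Z}$ is ergodic with respect to normalized Lebesgue measure. -/

import Mathlib

/-!
Lift `f` to a function `F` on the circle `AddCircle τ`. Translating `F` by `y` multiplies its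
`n`-th Fourier coefficient by `fourier n y`, so integrating the harmonicity identity against the
law of `L₁` multiplies that coefficient by `exp (-q (2πn/τ))`, a number of modulus `< 1` when
`n ≠ 0`. Hence only the zeroth coefficient survives; since the characters form a Hilbert basis of
`L²`, `F` is a.e. constant, and this pulls back to `ℝ` because the covering map sends null sets
to null sets.
-/

open MeasureTheory

namespace AddCircle

variable {T : ℝ} [hT : Fact (0 < T)]

theorem quasiMeasurePreserving_mk_haarAddCircle :
    Measure.QuasiMeasurePreserving ((↑) : ℝ → AddCircle T) volume haarAddCircle := by
  refine ⟨AddCircle.measurable_mk', Measure.AbsolutelyContinuous.mk fun s hs hs0 => ?_⟩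
  rw [Measure.map_apply AddCircle.measurable_mk' hs]
  refine (isAddFundamentalDomain_Ioc hT.out 0).measure_zero_of_invariant _ (fun g => ?_) ?_
  · ext x
    have hg : ((-g +ᵥ x : ℝ) : AddCircle T) = x := by
      rw [AddSubgroup.vadd_def, vadd_eq_add, QuotientAddGroup.mk_add,
        (QuotientAddGroup.eq_zero_iff _).mpr (-g).2, zero_add]
    rw [Set.mem_vadd_set_iff_neg_vadd_mem, Set.mem_preimage, Set.mem_preimage, hg]
  · rw [← add_projection_respects_measure T 0 hs, volume_eq_smul_haarAddCircle,
      Measure.smul_apply, hs0, smul_zero]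

omit hT in
theorem fourier_apply_add (n : ℤ) (x y : AddCircle T) :
    fourier n (x + y) = fourier n x * fourier n y := by
  simp only [fourier_apply, smul_add, toCircle_add, Circle.coe_mul]

variable {E : Type*} [NormedAddCommGroup E] [NormedSpace ℂ E]

theorem fourierCoeff_comp_add_right (F : AddCircle T → E) (y : AddCircle T) (n : ℤ) :
    fourierCoeff (fun z => F (z + y)) n = fourier n y • fourierCoeff F n := by
  have hy : fourier n y * fourier (-n) y = 1 := by
    rw [← fourier_add, add_neg_cancel, fourier_zero]
  calc ∫ z, fourier (-n) z • F (z + y) ∂haarAddCircle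
      = ∫ z, fourier n y • (fourier (-n) (z + y) • F (z + y)) ∂haarAddCircle := by
        congr 1 with z
        rw [smul_smul, fourier_apply_add, mul_left_comm, hy, mul_one]
    _ = ∫ z, fourier n y • (fourier (-n) z • F z) ∂haarAddCircle :=
        integral_add_right_eq_self (fun z => fourier n y • (fourier (-n) z • F z)) y
    _ = fourier n y • fourierCoeff F n := integral_smul _ _

theorem fourierCoeff_eq_smul_of_integral_comp_add_eq [CompleteSpace E] {ν : Measure ℝ}
    [IsFiniteMeasure ν] {F : AddCircle T → E} (hF : StronglyMeasurable F) {C : ℝ}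
    (hFC : ∀ z, ‖F z‖ ≤ C) (h : ∀ z, ∫ y, F (z + (y : AddCircle T)) ∂ν = F z) (n : ℤ) :
    fourierCoeff F n = (∫ y, fourier n (y : AddCircle T) ∂ν) • fourierCoeff F n := by
  have hint : Integrable (fun p : AddCircle T × ℝ => fourier (-n) p.1 • F (p.1 + p.2))
      (haarAddCircle.prod ν) := by
    refine Integrable.of_bound ?_ C (Filter.Eventually.of_forall fun p => ?_)
    · exact ((map_continuous _).comp continuous_fst).aestronglyMeasurable.smul
        (hF.comp_measurable (by fun_prop)).aestronglyMeasurable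
    · rw [norm_smul, fourier_apply, Circle.norm_coe, one_mul]
      exact hFC _
  calc fourierCoeff F n
      = ∫ z, ∫ y, fourier (-n) z • F (z + (y : AddCircle T)) ∂ν ∂haarAddCircle := by
        simp_rw [integral_smul, h]; rfl
    _ = ∫ y, fourierCoeff (fun z => F (z + (y : AddCircle T))) n ∂ν :=
        integral_integral_swap hint
    _ = (∫ y, fourier n (y : AddCircle T) ∂ν) • fourierCoeff F n := by
        simp_rw [fourierCoeff_comp_add_right, integral_smul_const]

theorem ae_eq_fourierCoeff_zero_of_fourierCoeff_eq_zero {F : AddCircle T → ℂ}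
    (hF : MemLp F 2 haarAddCircle) (h : ∀ n ≠ 0, fourierCoeff F n = 0) :
    F =ᵐ[haarAddCircle] fun _ => fourierCoeff F 0 := by
  classical
  have hLp : hF.toLp F = fourierCoeff F 0 • fourierBasis 0 := by
    apply fourierBasis.repr.injective
    ext n
    rw [map_smul, HilbertBasis.repr_self, fourierBasis_repr,
      fourierCoeff_congr_ae hF.coeFn_toLp]
    rcases eq_or_ne n 0 with rfl | hn
    · simp
    · simp [h n hn, hn]
  filter_upwards [hF.coeFn_toLp, Lp.coeFn_smul (fourierCoeff F 0) (fourierLp (T := T) 2 0),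
    coeFn_fourierLp (T := T) 2 0] with z hz hsmul h0
  rw [← hz, hLp, coe_fourierBasis, hsmul, Pi.smul_apply, h0, fourier_zero, smul_eq_mul, mul_one]

theorem fourierCoeff_eq_zero_of_integral_comp_add_eq [CompleteSpace E] {ν : Measure ℝ}
    [IsFiniteMeasure ν] {F : AddCircle T → E} (hF : StronglyMeasurable F) {C : ℝ}
    (hFC : ∀ z, ‖F z‖ ≤ C) (h : ∀ z, ∫ y, F (z + (y : AddCircle T)) ∂ν = F z) {n : ℤ}
    (hn : ∫ y, fourier n (y : AddCircle T) ∂ν ≠ 1) :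
    fourierCoeff F n = 0 := by
  have hfix := fourierCoeff_eq_smul_of_integral_comp_add_eq hF hFC h n
  have : (1 - ∫ y, fourier n (y : AddCircle T) ∂ν) • fourierCoeff F n = 0 := by
    rw [sub_smul, one_smul, ← hfix, sub_self]
  exact (smul_eq_zero.mp this).resolve_left (sub_ne_zero.mpr hn.symm)

end AddCircle

open Real in
/-- For a one-dimensional Lévy process with characteristic
exponent `q` satisfying `Re q(2πk/τ) > 0` for all nonzero integers `k`, every
bounded measurable `τ`-periodic harmonic function is Lebesgue-a.e. constant
(ergodicity of the projection on the torus `ℝ/τℤ`). -/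
theorem levy_torus_ergodic_harmonic_constant
    (τ : ℝ) (hτ : 0 < τ)
    (μ : ℝ → Measure ℝ) (hμ : ∀ t, IsProbabilityMeasure (μ t))
    (q : ℝ → ℂ)
    (hchar : ∀ t : ℝ, 0 ≤ t → ∀ ξ : ℝ,
      ∫ y, Complex.exp (Complex.I * ((ξ * y : ℝ) : ℂ)) ∂(μ t)
        = Complex.exp (-(t : ℂ) * q ξ))
    (hq : ∀ k : ℤ, k ≠ 0 → 0 < (q (2 * π * k / τ)).re)
    (f : ℝ → ℝ) (hfmeas : Measurable f) (M : ℝ) (hfb : ∀ x, |f x| ≤ M)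
    (hper : Function.Periodic f τ)
    (hharm : ∀ (x : ℝ) (t : ℝ), 0 ≤ t → ∫ y, f (x + y) ∂(μ t) = f x) :
    ∃ cst : ℝ, ∀ᵐ x ∂(volume : Measure ℝ), f x = cst := by
  have := hμ 1
  have : Fact (0 < τ) := ⟨hτ⟩
  set F : AddCircle τ → ℂ := fun z => (hper.lift z : ℂ)
  have hF_meas : Measurable F :=
    Complex.measurable_ofReal.comp (measurable_from_quotient.mpr hfmeas)
  have hF_bdd (z : AddCircle τ) : ‖F z‖ ≤ M :=
    QuotientAddGroup.induction_on z fun x => by simpa [F] using hfb x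
  have hF_harm (z : AddCircle τ) : ∫ y, F (z + (y : AddCircle τ)) ∂μ 1 = F z :=
    QuotientAddGroup.induction_on z fun x => by
      simp_rw [F, ← QuotientAddGroup.mk_add, Function.Periodic.lift_coe]
      rw [integral_complex_ofReal, hharm x 1 zero_le_one]
  have hchar_fourier (n : ℤ) :
      ∫ y, fourier n (y : AddCircle τ) ∂μ 1 = Complex.exp (-(1 : ℝ) * q (2 * π * n / τ)) := by
    rw [← hchar 1 zero_le_one]
    congr 1 with y
    rw [fourier_coe_apply]
    congr 1
    push_cast
    ring
  have hF_coeff (n : ℤ) (hn : n ≠ 0) : fourierCoeff F n = 0 := by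
    refine AddCircle.fourierCoeff_eq_zero_of_integral_comp_add_eq hF_meas.stronglyMeasurable
      hF_bdd hF_harm ?_
    rw [hchar_fourier]
    intro h1
    have := congrArg norm h1
    rw [Complex.norm_exp, norm_one, Real.exp_eq_one_iff] at this
    simp only [Complex.ofReal_one, neg_mul, one_mul, Complex.neg_re, neg_eq_zero] at this
    linarith [hq n hn]
  have hF_const := AddCircle.ae_eq_fourierCoeff_zero_of_fourierCoeff_eq_zero
    (MemLp.of_bound hF_meas.aestronglyMeasurable M (Filter.Eventually.of_forall hF_bdd)) hF_coeff
  refine ⟨(fourierCoeff F 0).re, ?_⟩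
  filter_upwards [AddCircle.quasiMeasurePreserving_mk_haarAddCircle.ae hF_const] with x hx
  simpa [F] using congrArg Complex.re hx
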